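/- arXiv:2107.01169 — 5 statements merged into one kernel-verified Lean document; each statement's English description precedes it below -/
import Mathlib

section
/- Let X be a finite set of size s, let k ≥ 2, and let 𝔓 be a k-partial packing of X of order r. Then there exists a k-server PIR [r+s, s]-code. -/
/-- `G` is the generator matrix of a `k`-server PIR `[m,s]`-code: for every `i : Fin s`
there exist `k` pairwise disjoint recovery sets of columns, each of which sums to the
`i`-th standard basis vector of `(ZMod 2)^s`. -/
def IsPIRMatrix (s m k : ℕ) (G : Matrix (Fin s) (Fin m) (ZMod 2)) : Prop :=
  ∀ i : Fin s, ∃ R : Fin k → Finset (Fin m),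
    (Pairwise fun a b => Disjoint (R a) (R b)) ∧
    ∀ a : Fin k, (∑ j ∈ R a, fun r => G r j) = Pi.single i (1 : ZMod 2)

/-- There exists a `k`-server PIR `[m,s]`-code. -/
def ExistsPIRCode (s m k : ℕ) : Prop :=
  ∃ G : Matrix (Fin s) (Fin m) (ZMod 2), IsPIRMatrix s m k G

/-- A `k`-partial packing of a finite set `X`: a family of `k-1` partitions of `X` such that
every block has at least two elements and two blocks from distinct partitions meet in at
most one element. -/
structure PartialPacking (X : Type*) [DecidableEq X] [Fintype X] (k : ℕ) where
  parts : Fin (k - 1) → Finset (Finset X)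
  partition : ∀ i, ∀ x : X, ∃! B, B ∈ parts i ∧ x ∈ B
  blockSize : ∀ i, ∀ B ∈ parts i, 2 ≤ B.card
  cross : ∀ i j, i ≠ j → ∀ B ∈ parts i, ∀ C ∈ parts j, (B ∩ C).card ≤ 1

/-- The order of a partial packing: the total number of blocks in its partitions. -/
def PartialPacking.order {X : Type*} [DecidableEq X] [Fintype X] {k : ℕ}
    (P : PartialPacking X k) : ℕ :=
  ∑ i, (P.parts i).card

/-! Take as columns the incidence vector of every block of every partition, followed by the `s`
unit vectors. The unit vector `e x` alone recovers `e x`; for each partition, the block `B ∋ x`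
together with the unit vectors `e y`, `y ∈ B \ {x}`, recovers `e x` as well, since over `ZMod 2`
these columns sum to `e x`. Two such recovery sets from distinct partitions can only share a unit
vector `e y` with `y ≠ x`, which would put `x` and `y` into two blocks that meet in at most one
element. -/

open Finset Function

section RecoverySets

variable {ι X : Type*} [DecidableEq X]

def HasRecoverySets (κ : Type*) (c : ι → X → ZMod 2) : Prop :=
  ∀ x : X, ∃ R : κ → Finset ι,
    (Pairwise fun a b => Disjoint (R a) (R b)) ∧ ∀ a, ∑ j ∈ R a, c j = Pi.single x 1

theorem isPIRMatrix_iff_hasRecoverySets {s m k : ℕ} (G : Matrix (Fin s) (Fin m) (ZMod 2)) :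
    IsPIRMatrix s m k G ↔ HasRecoverySets (Fin k) fun j r => G r j :=
  Iff.rfl

theorem HasRecoverySets.comp_embedding {κ κ' : Type*} {c : ι → X → ZMod 2}
    (h : HasRecoverySets κ c) (f : κ' ↪ κ) : HasRecoverySets κ' c := fun x => by
  obtain ⟨R, hdisj, hsum⟩ := h x
  exact ⟨R ∘ f, fun a b hab => hdisj (f.injective.ne hab), fun a => hsum (f a)⟩

theorem HasRecoverySets.reindex {κ ι' X' : Type*} [DecidableEq X'] {c : ι → X → ZMod 2}
    (h : HasRecoverySets κ c) (eι : ι ≃ ι') (eX : X ≃ X') :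
    HasRecoverySets κ fun j x => c (eι.symm j) (eX.symm x) := fun x => by
  obtain ⟨R, hdisj, hsum⟩ := h (eX.symm x)
  refine ⟨fun a => (R a).map eι.toEmbedding, fun a b hab => (disjoint_map _).2 (hdisj hab),
    fun a => ?_⟩
  funext y
  rw [Finset.sum_apply, sum_map]
  simpa [Pi.single_apply, eX.symm_apply_eq] using congrFun (hsum a) (eX.symm y)

theorem existsPIRCode_of_hasRecoverySets {κ : Type*} [Fintype ι] [Fintype X] [Fintype κ]
    {c : ι → X → ZMod 2} (h : HasRecoverySets κ c) {k : ℕ} (hk : k ≤ Fintype.card κ) :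
    ExistsPIRCode (Fintype.card X) (Fintype.card ι) k :=
  ⟨_, (isPIRMatrix_iff_hasRecoverySets _).2 <|
    (h.reindex (Fintype.equivFin ι) (Fintype.equivFin X)).comp_embedding
      ((Fin.castLEEmb hk).trans (Fintype.equivFin κ).symm.toEmbedding)⟩

end RecoverySets

namespace PartialPacking

variable {X : Type*} [DecidableEq X] [Fintype X] {k : ℕ} (P : PartialPacking X k)

noncomputable def block (a : Fin (k - 1)) (x : X) : Finset X :=
  (P.partition a x).exists.choose

theorem block_mem (a : Fin (k - 1)) (x : X) : P.block a x ∈ P.parts a :=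
  (P.partition a x).exists.choose_spec.1

theorem mem_block (a : Fin (k - 1)) (x : X) : x ∈ P.block a x :=
  (P.partition a x).exists.choose_spec.2

theorem disjoint_erase_block {a b : Fin (k - 1)} (hab : a ≠ b) (x : X) :
    Disjoint ((P.block a x).erase x) ((P.block b x).erase x) := by
  refine disjoint_left.2 fun y hya hyb => ?_
  have hinter : 1 < (P.block a x ∩ P.block b x).card :=
    one_lt_card.2 ⟨x, mem_inter.2 ⟨P.mem_block a x, P.mem_block b x⟩,
      y, mem_inter.2 ⟨mem_of_mem_erase hya, mem_of_mem_erase hyb⟩, (ne_of_mem_erase hya).symm⟩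
  exact (P.cross a b hab _ (P.block_mem a x) _ (P.block_mem b x)).not_gt hinter

abbrev Column := (Σ a, P.parts a) ⊕ X

theorem card_column : Fintype.card P.Column = P.order + Fintype.card X := by
  simp [order, Fintype.card_sigma]

def column : P.Column → X → ZMod 2 :=
  Sum.elim (fun B => ∑ y ∈ B.2.1, Pi.single y 1) fun y => Pi.single y 1

noncomputable def recoverySet (x : X) : Option (Fin (k - 1)) → Finset P.Column
  | none => {.inr x}
  | some a => insert (.inl ⟨a, P.block a x, P.block_mem a x⟩)
      (((P.block a x).erase x).map Embedding.inr)

theorem sum_column_recoverySet (x : X) (a : Option (Fin (k - 1))) :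
    ∑ j ∈ P.recoverySet x a, P.column j = Pi.single x 1 := by
  cases a with
  | none => simp [recoverySet, column]
  | some a =>
    rw [recoverySet, sum_insert (by simp), sum_map]
    simp only [column, Sum.elim_inl, Embedding.inr_apply, Sum.elim_inr]
    rw [← add_sum_erase _ _ (P.mem_block a x), add_assoc, ZModModule.add_self, add_zero]

theorem pairwise_disjoint_recoverySet (x : X) :
    Pairwise fun a b => Disjoint (P.recoverySet x a) (P.recoverySet x b) := by
  have hsingle : ∀ a, Disjoint (P.recoverySet x none) (P.recoverySet x (some a)) := fun a => by
    simp [recoverySet]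
  rintro (_ | a) (_ | b) hne
  · exact absurd rfl hne
  · exact hsingle b
  · exact (hsingle a).symm
  · have hab : a ≠ b := fun h => hne (congrArg some h)
    simp only [recoverySet, disjoint_insert_left, disjoint_insert_right, disjoint_map,
      P.disjoint_erase_block hab x]
    simp [Ne.symm hab]

theorem hasRecoverySets : HasRecoverySets (Option (Fin (k - 1))) P.column := fun x =>
  ⟨P.recoverySet x, P.pairwise_disjoint_recoverySet x, P.sum_column_recoverySet x⟩

end PartialPacking

theorem pir_code_of_partial_packing_general {X : Type*} [DecidableEq X] [Fintype X]
    (s k r : ℕ) (hs : Fintype.card X = s)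
    (𝔓 : PartialPacking X k) (hr : 𝔓.order = r) :
    ExistsPIRCode s (r + s) k := by
  subst hs hr
  rw [← 𝔓.card_column]
  refine existsPIRCode_of_hasRecoverySets 𝔓.hasRecoverySets ?_
  rw [Fintype.card_option, Fintype.card_fin]
  omega

/-- If `X` is a finite set of size `s`, `k ≥ 2`, and `𝔓` is a `k`-partial
packing of `X` of order `r`, then there exists a `k`-server PIR `[r+s, s]`-code. -/
theorem pir_code_of_partial_packing {X : Type*} [DecidableEq X] [Fintype X]
    (s k r : ℕ) (hs : Fintype.card X = s) (hk : 2 ≤ k)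
    (𝔓 : PartialPacking X k) (hr : 𝔓.order = r) :
    ExistsPIRCode s (r + s) k :=
  pir_code_of_partial_packing_general s k r hs 𝔓 hr
end

section
/- Let k ≥ 2 and s = a_1 · a_2 ⋯ a_{k−1} with each a_i ≥ 2 an integer. Then for each integer w with 1 ≤ w ≤ k−1 there exists a (w+1)-server PIR [m,s]-code with m = s + s/a_1 + s/a_2 + ⋯ + s/a_w. In particular, if s = h^{k−1} for an integer h ≥ 2, then for each w with 1 ≤ w ≤ k−1 there exists a (w+1)-server PIR [s + w·(s/h), s]-code. -/
/-!
Write `s = a₁ ⋯ a_{k-1}` and view the message positions as the cells of the grid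
`[a₁] × ⋯ × [a_{k-1}]`. For `i ≤ w`, the lines parallel to the `i`-th axis partition the grid
into `s / aᵢ` classes; append one parity column per class to the identity matrix. A position
`x` is recovered by server `0` from its own systematic column, and by server `i` from the
parity column of the `i`-th line through `x` together with the systematic columns of the other
cells of that line (the sum cancels in characteristic `2`). Lines in two different directions
meet only in `x`, so the `w + 1` recovery sets are disjoint.
-/

open Finset

theorem existsPIRCode_of_recoverySets {s : ℕ} {κ σ : Type*} [Fintype κ] [Fintype σ]
    (G : Matrix (Fin s) κ (ZMod 2))
    (hG : ∀ i : Fin s, ∃ R : σ → Finset κ, (Pairwise fun a b => Disjoint (R a) (R b)) ∧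
      ∀ a, (∑ j ∈ R a, fun r => G r j) = Pi.single i (1 : ZMod 2)) :
    ExistsPIRCode s (Fintype.card κ) (Fintype.card σ) := by
  let eκ := Fintype.equivFin κ
  let eσ := Fintype.equivFin σ
  refine ⟨fun r j => G r (eκ.symm j), fun i => ?_⟩
  obtain ⟨R, hdisj, hsum⟩ := hG i
  refine ⟨fun a => (R (eσ.symm a)).map eκ.toEmbedding, fun a b hab => ?_, fun a => ?_⟩
  · exact (disjoint_map _).2 <| hdisj (eσ.symm.injective.ne hab)
  · simpa [sum_map] using hsum (eσ.symm a)

section Systematic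

variable {s w : ℕ} {β : Fin w → Type*} [∀ i, DecidableEq (β i)]
  (f : ∀ i, Fin s → β i)

def parityMatrix : Matrix (Fin s) (Σ i, β i) (ZMod 2) :=
  Matrix.of fun r p => if f p.1 r = p.2 then 1 else 0

def fibreMates (i : Fin w) (x : Fin s) : Finset (Fin s) :=
  ({y | f i y = f i x} : Finset (Fin s)).erase x

def recoverySet (x : Fin s) : Option (Fin w) → Finset (Fin s ⊕ Σ i, β i)
  | none => {Sum.inl x}
  | some i => insert (Sum.inr ⟨i, f i x⟩) ((fibreMates f i x).map Function.Embedding.inl)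

theorem parityMatrix_col (i : Fin w) (b : β i) :
    (fun r => parityMatrix f r ⟨i, b⟩) = ∑ y ∈ ({y | f i y = b} : Finset (Fin s)),
      Pi.single y (1 : ZMod 2) := by
  ext r
  simp [parityMatrix, Finset.sum_apply, Pi.single_apply, eq_comm]

theorem sum_recoverySet (x : Fin s) (a : Option (Fin w)) :
    (∑ j ∈ recoverySet f x a, fun r => Matrix.fromCols 1 (parityMatrix f) r j) =
      Pi.single x 1 := by
  have hcol (y : Fin s) : (fun r => Matrix.fromCols 1 (parityMatrix f) r (Sum.inl y)) =
      Pi.single y (1 : ZMod 2) := by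
    ext r
    simp [Matrix.one_apply, Pi.single_apply, eq_comm]
  cases a with
  | none => simpa [recoverySet] using hcol x
  | some i =>
    have hfibre : ∑ y ∈ ({y | f i y = f i x} : Finset (Fin s)), Pi.single y (1 : ZMod 2) =
        Pi.single x 1 + ∑ y ∈ fibreMates f i x, Pi.single y 1 :=
      (add_sum_erase _ _ (by simp)).symm
    rw [recoverySet, sum_insert (by simp), sum_map]
    simp only [Function.Embedding.inl_apply, hcol, Matrix.fromCols_apply_inr,
      parityMatrix_col, hfibre, add_assoc, ZModModule.add_self, add_zero]

theorem pairwise_disjoint_recoverySet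
    (hf : Pairwise fun i j => Function.Injective fun x => (f i x, f j x)) (x : Fin s) :
    Pairwise fun a b => Disjoint (recoverySet f x a) (recoverySet f x b) := by
  have hnone (i : Fin w) : Disjoint (recoverySet f x none) (recoverySet f x (some i)) := by
    simp [recoverySet, fibreMates]
  rintro (_ | i) (_ | j) hij
  · exact absurd rfl hij
  · exact hnone j
  · exact (hnone i).symm
  · have hij : i ≠ j := fun h => hij (congrArg some h)
    refine disjoint_insert_left.2 ⟨by simp [recoverySet, hij],
      disjoint_insert_right.2 ⟨by simp, (disjoint_map _).2 ?_⟩⟩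
    rw [disjoint_left]
    intro y hyi hyj
    simp only [fibreMates, mem_erase, mem_filter, mem_univ,
      true_and] at hyi hyj
    exact hyi.1 (hf hij (Prod.ext hyi.2 hyj.2))

theorem existsPIRCode_of_pairwise_injective [∀ i, Fintype (β i)]
    (hf : Pairwise fun i j => Function.Injective fun x => (f i x, f j x)) :
    ExistsPIRCode s (s + ∑ i, Fintype.card (β i)) (w + 1) := by
  have := existsPIRCode_of_recoverySets (Matrix.fromCols 1 (parityMatrix f))
    fun x => ⟨recoverySet f x, pairwise_disjoint_recoverySet f hf x, sum_recoverySet f x⟩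
  simpa [Fintype.card_sigma] using this

end Systematic

theorem Subtype.restrict_ne_prod_injective {ι : Type*} {β : ι → Type*} {j j' : ι}
    (h : j ≠ j') :
    Function.Injective fun x : (∀ i, β i) =>
      (Subtype.restrict (· ≠ j) x, Subtype.restrict (· ≠ j') x) := by
  intro x y hxy
  funext i
  by_cases hi : i = j
  · subst hi
    exact congrFun (Prod.ext_iff.1 hxy).2 ⟨i, h⟩
  · exact congrFun (Prod.ext_iff.1 hxy).1 ⟨i, hi⟩

theorem Fintype.card_pi_fin_subtype_ne {ι : Type*} [Fintype ι] [DecidableEq ι] (a : ι → ℕ)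
    (j : ι) (hj : a j ≠ 0) :
    Fintype.card (∀ i : {i // i ≠ j}, Fin (a i)) = (∏ i, a i) / a j := by
  rw [Fintype.prod_eq_mul_prod_subtype_ne a j, Nat.mul_div_cancel_left _ (Nat.pos_of_ne_zero hj)]
  simp

theorem existsPIRCode_of_grid {ι : Type*} [Fintype ι] [DecidableEq ι] (a : ι → ℕ)
    (ha : ∀ i, a i ≠ 0) {w : ℕ} (c : Fin w → ι) (hc : Function.Injective c) :
    ExistsPIRCode (∏ i, a i) (∏ i, a i + ∑ i, (∏ j, a j) / a (c i)) (w + 1) := by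
  let e : Fin (∏ i, a i) ≃ ∀ i, Fin (a i) := (Fintype.equivFinOfCardEq (by simp)).symm
  have := existsPIRCode_of_pairwise_injective (fun i => Subtype.restrict (· ≠ c i) ∘ e)
    fun i i' hii' => (Subtype.restrict_ne_prod_injective (hc.ne hii')).comp e.injective
  simpa only [Fintype.card_pi_fin_subtype_ne a _ (ha _)] using this

theorem pir_code_of_product_general (k : ℕ) :
    (∀ (a : Fin (k - 1) → ℕ), (∀ i, 2 ≤ a i) → ∀ s : ℕ, s = ∏ i, a i →
      ∀ w : ℕ, 1 ≤ w → ∀ (hw : w ≤ k - 1),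
        ExistsPIRCode s (s + ∑ i : Fin w, s / a (Fin.castLE hw i)) (w + 1)) ∧
    (∀ h s : ℕ, 2 ≤ h → s = h ^ (k - 1) →
      ∀ w : ℕ, 1 ≤ w → w ≤ k - 1 → ExistsPIRCode s (s + w * (s / h)) (w + 1)) := by
  refine ⟨?_, ?_⟩
  · rintro a ha s rfl w - hw
    exact existsPIRCode_of_grid a (fun i => by linarith [ha i]) _ (Fin.castLE_injective hw)
  · rintro h s hh rfl w - hw
    have := existsPIRCode_of_grid (fun _ : Fin (k - 1) => h) (fun _ => by linarith) _
      (Fin.castLE_injective hw)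
    simpa [mul_comm] using this

/-- If `k ≥ 2` and `s = a_1 ⋯ a_{k-1}` with each `a_i ≥ 2`, then for each
`1 ≤ w ≤ k-1` there is a `(w+1)`-server PIR `[s + s/a_1 + ⋯ + s/a_w, s]`-code; in
particular, if `s = h^{k-1}` with `h ≥ 2`, then for each `1 ≤ w ≤ k-1` there is a
`(w+1)`-server PIR `[s + w·(s/h), s]`-code. -/
theorem pir_code_of_product (k : ℕ) (hk : 2 ≤ k) :
    (∀ (a : Fin (k - 1) → ℕ), (∀ i, 2 ≤ a i) → ∀ s : ℕ, s = ∏ i, a i →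
      ∀ w : ℕ, 1 ≤ w → ∀ (hw : w ≤ k - 1),
        ExistsPIRCode s (s + ∑ i : Fin w, s / a (Fin.castLE hw i)) (w + 1)) ∧
    (∀ h s : ℕ, 2 ≤ h → s = h ^ (k - 1) →
      ∀ w : ℕ, 1 ≤ w → w ≤ k - 1 → ExistsPIRCode s (s + w * (s / h)) (w + 1)) :=
  pir_code_of_product_general k
end

section
/- Let q be a prime power and N ≥ 2 an integer, and set s = q^N. Then for every integer k with 2 ≤ k ≤ 1 + (q^N−1)/(q−1) there exists a k-server PIR [m,s]-code with m = s + (k−1)·q^{N−1}. -/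
open Function Finset

namespace Matrix

variable {ρ ι ρ' ι' : Type*} [DecidableEq ρ] [DecidableEq ρ']

def IsPIR (k : ℕ) (G : Matrix ρ ι (ZMod 2)) : Prop :=
  ∀ i : ρ, ∃ R : Fin k → Finset ι,
    (Pairwise fun a b => Disjoint (R a) (R b)) ∧
    ∀ a : Fin k, (∑ j ∈ R a, fun r => G r j) = Pi.single i 1

theorem IsPIR.reindex {k : ℕ} {G : Matrix ρ ι (ZMod 2)} (h : G.IsPIR k)
    (eρ : ρ ≃ ρ') (eι : ι ≃ ι') : (reindex eρ eι G).IsPIR k := by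
  intro i
  obtain ⟨R, hdisj, hsum⟩ := h (eρ.symm i)
  refine ⟨fun a => (R a).map eι.toEmbedding, fun a b hab => ?_, fun a => ?_⟩
  · simpa only [disjoint_map] using hdisj hab
  · ext r
    simpa [Finset.sum_apply, Pi.single_apply, eρ.symm_apply_eq] using
      congrFun (hsum a) (eρ.symm r)

end Matrix

theorem existsPIRCode_of_isPIR {ρ ι : Type*} [DecidableEq ρ] [Finite ρ] [Finite ι]
    {s m k : ℕ} {G : Matrix ρ ι (ZMod 2)} (h : G.IsPIR k)
    (hρ : Nat.card ρ = s) (hι : Nat.card ι = m) : ExistsPIRCode s m k :=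
  ⟨_, h.reindex ((Finite.equivFin ρ).trans (finCongr hρ))
    ((Finite.equivFin ι).trans (finCongr hι))⟩

section Partitions

variable {X : Type*} [Fintype X] [DecidableEq X] {n : ℕ} {C : Fin n → Type*}
  [∀ t, DecidableEq (C t)] (π : ∀ t, X → C t)

def partitionsCodeMatrix : Matrix X (X ⊕ Σ t, C t) (ZMod 2) :=
  Matrix.of fun x =>
    Sum.elim (fun y => (Pi.single y 1 : X → ZMod 2) x) fun b => if π b.1 x = b.2 then 1 else 0

def partitionsRecoverySet (i : X) : Fin (n + 1) → Finset (X ⊕ Σ t, C t) :=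
  Fin.cases {Sum.inl i} fun t => (({y | π t y = π t i} : Finset X).erase i).disjSum {⟨t, π t i⟩}

theorem sum_partitionsRecoverySet (i : X) (a : Fin (n + 1)) :
    ∑ j ∈ partitionsRecoverySet π i a, (fun r => partitionsCodeMatrix π r j) = Pi.single i 1 := by
  induction a using Fin.cases with
  | zero => simp [partitionsRecoverySet, partitionsCodeMatrix]
  | succ t =>
    set B : Finset X := {y | π t y = π t i}
    have hblock : (fun r => partitionsCodeMatrix π r (Sum.inr ⟨t, π t i⟩)) =
        ∑ y ∈ B, Pi.single y 1 := by
      ext x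
      simp [partitionsCodeMatrix, Finset.sum_apply, Finset.sum_pi_single, B]
    have hinl : ∀ y, (fun r => partitionsCodeMatrix π r (Sum.inl y)) = Pi.single y 1 :=
      fun _ => rfl
    have hchar : ∀ v : X → ZMod 2, v + v = 0 := fun v => funext fun _ => CharTwo.add_self_eq_zero _
    simp only [partitionsRecoverySet, Fin.cases_succ, sum_disjSum, sum_singleton, hinl, hblock]
    -- every point of `B` other than `i` is now counted twice
    rw [← add_sum_erase B _ (by simp [B] : i ∈ B), add_left_comm, hchar, add_zero]

theorem pairwise_disjoint_partitionsRecoverySet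
    (hπ : Pairwise fun t t' => Injective fun x => (π t x, π t' x)) (i : X) :
    Pairwise fun a b => Disjoint (partitionsRecoverySet π i a) (partitionsRecoverySet π i b) := by
  have h0 : ∀ t : Fin n,
      Disjoint (partitionsRecoverySet π i 0) (partitionsRecoverySet π i t.succ) := by
    simp [partitionsRecoverySet]
  have hsucc : ∀ t t' : Fin n, t ≠ t' →
      Disjoint (partitionsRecoverySet π i t.succ) (partitionsRecoverySet π i t'.succ) := by
    intro t t' htt'
    simp only [partitionsRecoverySet, Fin.cases_succ]
    rw [disjoint_left]
    rintro (y | b) hy hy'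
    · simp only [inl_mem_disjSum, mem_erase, mem_filter, mem_univ, true_and] at hy hy'
      exact hy.1 (hπ htt' (Prod.ext hy.2 hy'.2))
    · simp only [inr_mem_disjSum, mem_singleton] at hy hy'
      exact htt' (congrArg Sigma.fst (hy.symm.trans hy'))
  intro a b hab
  induction a using Fin.cases <;> induction b using Fin.cases
  · exact absurd rfl hab
  · exact h0 _
  · exact (h0 _).symm
  · exact hsucc _ _ fun h => hab (congrArg _ h)

theorem isPIR_partitionsCodeMatrix
    (hπ : Pairwise fun t t' => Injective fun x => (π t x, π t' x)) :
    (partitionsCodeMatrix π).IsPIR (n + 1) := fun i =>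
  ⟨partitionsRecoverySet π i, pairwise_disjoint_partitionsRecoverySet π hπ i,
    sum_partitionsRecoverySet π i⟩

end Partitions

open scoped LinearAlgebra.Projectivization

namespace Projectivization

variable {K V : Type*} [Field K] [AddCommGroup V] [Module K V]

theorem submodule_inf_submodule_eq_bot {u v : ℙ K V} (huv : u ≠ v) :
    u.submodule ⊓ v.submodule = ⊥ := by
  refine (Submodule.eq_bot_iff _).2 fun x hx => by_contra fun hx0 => huv ?_
  have hline : ∀ w : ℙ K V, x ∈ w.submodule → w = mk K x hx0 := fun w hw =>
    submodule_injective <| by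
      rw [submodule_mk]
      have : FiniteDimensional K w.submodule :=
        Module.finite_of_finrank_eq_succ w.finrank_submodule
      exact (Submodule.eq_of_le_of_finrank_eq ((Submodule.span_singleton_le_iff_mem _ _).2 hw)
        (by rw [finrank_span_singleton hx0, finrank_submodule])).symm
  rw [hline u hx.1, hline v hx.2]

theorem injective_mkQ_prod_mkQ {u v : ℙ K V} (huv : u ≠ v) :
    Function.Injective fun x => (u.submodule.mkQ x, v.submodule.mkQ x) :=
  (LinearMap.ker_eq_bot (f := u.submodule.mkQ.prod v.submodule.mkQ)).1 <| by
    rw [LinearMap.ker_prod, Submodule.ker_mkQ, Submodule.ker_mkQ,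
      submodule_inf_submodule_eq_bot huv]

theorem natCard_quotient_submodule [Module.Finite K V] (u : ℙ K V) :
    Nat.card (V ⧸ u.submodule) = Nat.card K ^ (Module.finrank K V - 1) := by
  have := u.submodule.finrank_quotient_add_finrank
  rw [finrank_submodule] at this
  rw [Module.natCard_eq_pow_finrank (K := K), ← this, Nat.add_sub_cancel]

end Projectivization

open Projectivization in
theorem pir_code_of_affine_space_general (q N : ℕ) (hq : IsPrimePow q)
    (s : ℕ) (hs : s = q ^ N)
    (k : ℕ) (hk2 : 2 ≤ k) (hk : k ≤ 1 + (q ^ N - 1) / (q - 1)) :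
    ExistsPIRCode s (s + (k - 1) * q ^ (N - 1)) k := by
  classical
  obtain ⟨p, r, hp, hr, hpq⟩ := hq
  have : Fact p.Prime := ⟨hp.nat_prime⟩
  let F := GaloisField p r
  let V := Fin N → F
  have hF : Nat.card F = q := (GaloisField.card p r hr.ne').trans hpq
  have hV : Nat.card V = q ^ N := by rw [Nat.card_fun, hF, Nat.card_fin]
  let _ : Fintype V := Fintype.ofFinite V
  obtain ⟨n, rfl⟩ : ∃ n, k = n + 1 := ⟨k - 1, by omega⟩
  have hn : n ≤ Nat.card (ℙ F V) := by rw [card'', hV, hF]; omega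
  let f : Fin n ↪ ℙ F V := (Fin.castLEEmb hn).trans (Finite.equivFin _).symm.toEmbedding
  have hquot : ∀ t, Nat.card (V ⧸ (f t).submodule) = q ^ (N - 1) := fun t => by
    rw [natCard_quotient_submodule, hF, Module.finrank_fin_fun]
  refine existsPIRCode_of_isPIR (isPIR_partitionsCodeMatrix (fun t => (f t).submodule.mkQ)
    fun t t' htt' => injective_mkQ_prod_mkQ (f.injective.ne htt')) (hV.trans hs.symm) ?_
  rw [Nat.card_sum, Nat.card_sigma, hV, hs]
  simp only [hquot, sum_const, card_univ, Fintype.card_fin, smul_eq_mul, Nat.add_sub_cancel]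

/-- Let `q` be a prime power and `N ≥ 2`, and set `s = q^N`. Then for
every `2 ≤ k ≤ 1 + (q^N - 1)/(q - 1)` there exists a `k`-server PIR `[m,s]`-code with
`m = s + (k-1)·q^{N-1}` (from the parallelism classes of lines of `AG(N,q)`). -/
theorem pir_code_of_affine_space (q N : ℕ) (hq : IsPrimePow q) (hN : 2 ≤ N)
    (s : ℕ) (hs : s = q ^ N)
    (k : ℕ) (hk2 : 2 ≤ k) (hk : k ≤ 1 + (q ^ N - 1) / (q - 1)) :
    ExistsPIRCode s (s + (k - 1) * q ^ (N - 1)) k :=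
  pir_code_of_affine_space_general q N hq s hs k hk2 hk
end

section
/- Let q be a prime power, N ≥ 2 an integer, and h an integer with 2 ≤ h ≤ q; set s = h·q^{N−1}. Then for every integer k with 2 ≤ k ≤ 1 + q^{N−1} there exists a k-server PIR [m,s]-code with m = (h+k−1)·q^{N−1} = s + (k−1)·q^{N−1}. -/
/-! View each of the `h` parallel hyperplanes of `AG(N,q)` as a copy of a field `F` of order
`q^{N-1}`, so that `E` becomes `h` parallel lines `y = β b` of the affine plane `F²`. The code is
systematic, with one information column per point of `E` and, for each of `k - 1` directions not
parallel to these lines, one parity column per line of that direction: its incidence vector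
with `E`. A point `p` is recovered from its own column and, for each direction, from the parity
column of the line through `p` plus the other points of `E` on that line. Two lines through `p`
with different directions share no further point, so these `k` recovery sets are disjoint. -/

open Finset Function

def IsPIRGenerator (ι : Type*) {I J : Type*} [DecidableEq I] (G : Matrix I J (ZMod 2)) : Prop :=
  ∀ i : I, ∃ R : ι → Finset J,
    Pairwise (Disjoint on R) ∧ ∀ a, ∑ j ∈ R a, (fun r => G r j) = Pi.single i (1 : ZMod 2)

theorem existsPIRCode_of_isPIRGenerator {ι I J : Type*} [Fintype ι] [Fintype I] [Fintype J]
    [DecidableEq I] {s m k : ℕ} (hI : Fintype.card I = s) (hJ : Fintype.card J = m)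
    (hι : Fintype.card ι = k) {G : Matrix I J (ZMod 2)} (hG : IsPIRGenerator ι G) :
    ExistsPIRCode s m k := by
  let eI : Fin s ≃ I := Fintype.equivOfCardEq (by simp [hI])
  let eJ : Fin m ≃ J := Fintype.equivOfCardEq (by simp [hJ])
  let eι : Fin k ≃ ι := Fintype.equivOfCardEq (by simp [hι])
  refine ⟨G.submatrix eI eJ, fun i => ?_⟩
  obtain ⟨R, hdisj, hsum⟩ := hG (eI i)
  refine ⟨fun a => (R (eι a)).map eJ.symm.toEmbedding,
    fun a b hab => disjoint_map _ |>.mpr (hdisj (eι.injective.ne hab)), fun a => ?_⟩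
  funext r
  have hr := congrFun (hsum (eι a)) (eI r)
  simp only [Finset.sum_apply, sum_map, Equiv.coe_toEmbedding, Matrix.submatrix_apply,
    Equiv.apply_symm_apply] at hr ⊢
  rw [hr]
  simp only [Pi.single_apply, eI.apply_eq_iff_eq]

section LineCode

variable {P D Λ : Type*} [DecidableEq P] [DecidableEq Λ] (π : D → P → Λ)

/-- `[1 | A]` with `A` the incidence matrix of points and lines, the lines of direction `a`
being the fibres `{p | π a p = ℓ}` of `π a`. -/
def lineCodeMatrix : Matrix P (P ⊕ D × Λ) (ZMod 2) :=
  Matrix.fromCols 1 (Matrix.of fun p x => if π x.1 p = x.2 then 1 else 0)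

theorem lineCodeMatrix_col_inl (p : P) :
    (fun r => lineCodeMatrix π r (Sum.inl p)) = Pi.single p 1 := by
  funext r
  simp [lineCodeMatrix, Matrix.one_eq_pi_single, Pi.single_apply, eq_comm]

variable [Fintype P]

def lineThrough (a : D) (p : P) : Finset P := {p' | π a p' = π a p}

theorem lineCodeMatrix_col_inr (a : D) (p : P) :
    (fun r => lineCodeMatrix π r (Sum.inr (a, π a p))) =
      ∑ p' ∈ lineThrough π a p, Pi.single p' 1 := by
  funext r
  simp [lineCodeMatrix, lineThrough, Finset.sum_apply, Pi.single_apply]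

variable [DecidableEq D]

def lineRecoverySet (p : P) : Option D → Finset (P ⊕ D × Λ)
  | none => {Sum.inl p}
  | some a => insert (Sum.inr (a, π a p)) (((lineThrough π a p).erase p).map Embedding.inl)

/-- The parity column of a line through `p` cancels, in characteristic 2, every point of that
line except `p`. -/
theorem sum_lineRecoverySet (p : P) (a : Option D) :
    ∑ j ∈ lineRecoverySet π p a, (fun r => lineCodeMatrix π r j) = Pi.single p 1 := by
  cases a with
  | none => simp [lineRecoverySet, lineCodeMatrix_col_inl]
  | some a =>
    have hp : p ∈ lineThrough π a p := by simp [lineThrough]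
    rw [lineRecoverySet, sum_insert (by simp), sum_map, lineCodeMatrix_col_inr,
      ← add_sum_erase _ _ hp]
    simp only [Embedding.inl_apply, lineCodeMatrix_col_inl]
    funext r
    simp only [Pi.add_apply, add_assoc, CharTwo.add_self_eq_zero, add_zero]

variable {π} in
theorem pairwise_disjoint_lineRecoverySet
    (hπ : ∀ a a', a ≠ a' → ∀ p p', π a p = π a p' → π a' p = π a' p' → p = p') (p : P) :
    Pairwise (Disjoint on lineRecoverySet π p) := by
  rintro (_ | a) (_ | a') haa'
  · exact absurd rfl haa'
  · simp [onFun, lineRecoverySet]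
  · simp [onFun, lineRecoverySet]
  · have ha : a ≠ a' := fun h => haa' (congrArg some h)
    simp only [onFun, lineRecoverySet, disjoint_insert_left, disjoint_insert_right]
    refine ⟨by simp [ha.symm], by simp, ?_⟩
    rw [disjoint_map, disjoint_left]
    simp only [mem_erase, lineThrough, mem_filter, mem_univ, true_and]
    rintro p' ⟨hp'p, hp'a⟩ ⟨-, hp'a'⟩
    exact hp'p (hπ a a' ha p' p hp'a hp'a')

theorem isPIRGenerator_lineCodeMatrix
    (hπ : ∀ a a', a ≠ a' → ∀ p p', π a p = π a p' → π a' p = π a' p' → p = p') :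
    IsPIRGenerator (Option D) (lineCodeMatrix π) := fun p =>
  ⟨lineRecoverySet π p, pairwise_disjoint_lineRecoverySet hπ p, sum_lineRecoverySet π p⟩

end LineCode

section AffinePlane

variable {F B D : Type*} [Field F] (β : B ↪ F) (d : D ↪ F)

/-- The pair `(b, t)` encodes the point `(t, β b)` of `F²`, which lies on the line `y = β b`;
the lines of direction `(d a, 1)` are the fibres of `intercept β d a`. -/
def intercept (a : D) (x : B × F) : F := x.2 - β x.1 * d a

theorem eq_of_intercept_eq_of_intercept_eq {a a' : D} (ha : a ≠ a') {x x' : B × F}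
    (hx : intercept β d a x = intercept β d a x')
    (hx' : intercept β d a' x = intercept β d a' x') : x = x' := by
  have hprod : (β x.1 - β x'.1) * (d a - d a') = 0 := by
    simp only [intercept] at hx hx'
    linear_combination hx' - hx
  have hb : x.1 = x'.1 :=
    β.injective <| sub_eq_zero.mp <| (mul_eq_zero.mp hprod).resolve_right
      (sub_ne_zero.mpr (d.injective.ne ha))
  have ht : x.2 = x'.2 := by simpa [intercept, hb] using hx
  exact Prod.ext hb ht

end AffinePlane

theorem existsPIRCode_of_le_card (F : Type*) [Field F] [Fintype F] {h K : ℕ}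
    (hh : h ≤ Fintype.card F) (hK : K ≤ Fintype.card F) :
    ExistsPIRCode (h * Fintype.card F) ((h + K) * Fintype.card F) (K + 1) := by
  classical
  obtain ⟨β⟩ := Function.Embedding.nonempty_of_card_le (α := Fin h) (by simpa using hh)
  obtain ⟨d⟩ := Function.Embedding.nonempty_of_card_le (α := Fin K) (by simpa using hK)
  exact existsPIRCode_of_isPIRGenerator (by simp) (by simp [add_mul]) (by simp)
    (isPIRGenerator_lineCodeMatrix (intercept β d)
      fun _ _ ha _ _ => eq_of_intercept_eq_of_intercept_eq β d ha)

theorem exists_field_card_eq {Q : ℕ} (hQ : IsPrimePow Q) :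
    ∃ (F : Type) (_ : Field F) (_ : Fintype F), Fintype.card F = Q :=
  ⟨Fin Q, (Fintype.nonempty_field_iff.mpr (by simpa using hQ)).some, inferInstance, by simp⟩

theorem pir_code_of_parallel_hyperplanes_general (q N h : ℕ) (hq : IsPrimePow q) (hN : 2 ≤ N)
    (hhq : h ≤ q) (s : ℕ) (hs : s = h * q ^ (N - 1))
    (k : ℕ) (hk2 : 2 ≤ k) (hk : k ≤ 1 + q ^ (N - 1)) :
    (h + k - 1) * q ^ (N - 1) = s + (k - 1) * q ^ (N - 1) ∧
      ExistsPIRCode s ((h + k - 1) * q ^ (N - 1)) k := by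
  obtain ⟨K, rfl⟩ : ∃ K, k = K + 1 := ⟨k - 1, by omega⟩
  have hm : h + (K + 1) - 1 = h + K := by omega
  refine ⟨by rw [hm, hs, Nat.add_sub_cancel, add_mul], ?_⟩
  obtain ⟨F, _, _, hF⟩ := exists_field_card_eq (hq.pow (by omega : N - 1 ≠ 0))
  have hqQ : q ≤ q ^ (N - 1) := Nat.le_self_pow (by omega) q
  rw [hm, hs, ← hF]
  exact existsPIRCode_of_le_card F (by omega) (by omega)

/-- Let `q` be a prime power, `N ≥ 2`, and `2 ≤ h ≤ q`; set
`s = h·q^{N-1}`. Then for every `2 ≤ k ≤ 1 + q^{N-1}` there exists a `k`-server PIR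
`[m,s]`-code with `m = (h+k-1)·q^{N-1} = s + (k-1)·q^{N-1}` (from `h` parallel
hyperplanes of `AG(N,q)`). -/
theorem pir_code_of_parallel_hyperplanes (q N h : ℕ) (hq : IsPrimePow q) (hN : 2 ≤ N)
    (hh2 : 2 ≤ h) (hhq : h ≤ q) (s : ℕ) (hs : s = h * q ^ (N - 1))
    (k : ℕ) (hk2 : 2 ≤ k) (hk : k ≤ 1 + q ^ (N - 1)) :
    (h + k - 1) * q ^ (N - 1) = s + (k - 1) * q ^ (N - 1) ∧
      ExistsPIRCode s ((h + k - 1) * q ^ (N - 1)) k :=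
  pir_code_of_parallel_hyperplanes_general q N h hq hN hhq s hs k hk2 hk
end

section
/- Let q ≥ 2 be a prime power and set s = q³ + 1. Then for every integer k with 2 ≤ k ≤ q² + 1 there exists a k-server PIR [m,s]-code with m = s + (k−1)·s/(q+1) = s + (k−1)(q² − q + 1). -/
open Finset Function Polynomial

theorem ExistsPIRCode.of_columns {κ : Type*} {s m k : ℕ} (e : κ ≃ Fin m)
    (col : κ → Fin s → ZMod 2)
    (h : ∀ i, ∃ R : Fin k → Finset κ, (Pairwise fun a b => Disjoint (R a) (R b)) ∧
      ∀ a, ∑ x ∈ R a, col x = Pi.single i 1) :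
    ExistsPIRCode s m k := by
  refine ⟨Matrix.of fun r j => col (e.symm j) r, fun i => ?_⟩
  obtain ⟨R, hdisj, hsum⟩ := h i
  refine ⟨fun a => (R a).map e.toEmbedding, fun a b hab => ?_, fun a => ?_⟩
  · simpa using hdisj hab
  · simpa [sum_map] using hsum a

theorem ExistsPIRCode.of_pairwise_injective_fin {s t k : ℕ} (Λ : Fin k → Fin s → Fin t)
    (hΛ : Pairwise fun a b => Injective fun i => (Λ a i, Λ b i)) :
    ExistsPIRCode s (s + k * t) (k + 1) := by
  classical
  let col : Fin s ⊕ Fin k × Fin t → Fin s → ZMod 2 :=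
    Sum.elim (fun j => Pi.single j 1) fun c => ∑ j with Λ c.1 j = c.2, Pi.single j 1
  refine .of_columns ((Equiv.sumCongr (.refl _) finProdFinEquiv).trans finSumFinEquiv) col
    fun i => ?_
  let R : Fin (k + 1) → Finset (Fin s ⊕ Fin k × Fin t) := Fin.cons {.inl i} fun a =>
    insert (.inr (a, Λ a i)) ((({j | Λ a j = Λ a i} : Finset _).erase i).map .inl)
  refine ⟨R, fun a b hab => ?_, fun a => ?_⟩
  · cases a using Fin.cases <;> cases b using Fin.cases
    case zero.zero => exact absurd rfl hab
    case succ.succ a b =>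
      have hab : a ≠ b := fun h => hab (h ▸ rfl)
      simp only [R, Fin.cons_succ, disjoint_left]
      rintro (j | c) hj <;> simp at hj ⊢
      · exact fun _ hb => hj.1 (hΛ hab (Prod.ext hj.2 hb))
      · simp [hj, hab]
    all_goals simp [R]
  · cases a using Fin.cases with
    | zero => simp [R, col]
    | succ a =>
      have hi : i ∈ ({j | Λ a j = Λ a i} : Finset _) := by simp
      simp only [R, Fin.cons_succ, col]
      rw [sum_insert (by simp), sum_map, Sum.elim_inr, ← add_sum_erase _ _ hi, add_assoc]
      simp only [Embedding.inl_apply, Sum.elim_inl, ZModModule.add_self, add_zero]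

theorem exists_fin_factor_of_card_image_le {α β : Type*} [Fintype α] [DecidableEq β]
    (f : α → β) {t : ℕ} (h : #(univ.image f) ≤ t) :
    ∃ g : α → Fin t, ∀ x y, g x = g y → f x = f y := by
  obtain ⟨e⟩ := Embedding.nonempty_of_card_le (α := univ.image f) (β := Fin t) (by simpa using h)
  exact ⟨fun x => e ⟨f x, mem_image_of_mem f (mem_univ x)⟩,
    fun x y hxy => congrArg Subtype.val (e.injective hxy)⟩

theorem ExistsPIRCode.of_pairwise_injective {P C : Type*} [Fintype P] [DecidableEq C] {k t : ℕ}
    (Λ : Fin k → P → C) (hΛ : Pairwise fun a b => Injective fun x => (Λ a x, Λ b x))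
    (ht : ∀ a, #(univ.image (Λ a)) ≤ t) :
    ExistsPIRCode (Fintype.card P) (Fintype.card P + k * t) (k + 1) := by
  choose g hg using fun a => exists_fin_factor_of_card_image_le (Λ a) (ht a)
  let e := Fintype.equivFin P
  refine .of_pairwise_injective_fin (fun a i => g a (e.symm i)) fun a b hab i j hij => ?_
  exact e.symm.injective <| hΛ hab <|
    Prod.ext (hg a _ _ (congrArg Prod.fst hij)) (hg b _ _ (congrArg Prod.snd hij))

theorem card_filter_pow_eq_mul_le {K : Type*} [Field K] [Fintype K] [DecidableEq K] {d : ℕ}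
    (hd : 1 < d) (c : K) : #{x | x ^ d = c * x} ≤ d := by
  have hdeg : (X ^ d - C c * X : K[X]).natDegree = d := by
    rw [natDegree_sub_eq_left_of_natDegree_lt] <;> simp
    exact (natDegree_C_mul_le c X).trans_lt (by simpa)
  refine (card_le_degree_of_subset_roots fun x hx => ?_).trans_eq hdeg
  have h0 : (X ^ d - C c * X : K[X]) ≠ 0 := fun h => by simp [h] at hdeg; omega
  simp_all [mem_roots h0, sub_eq_zero]

theorem one_lt_of_card_eq_sq {K : Type*} [Fintype K] [Nontrivial K] {q : ℕ}
    (hcard : Fintype.card K = q ^ 2) : 1 < q :=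
  (one_lt_pow_iff two_ne_zero).1 (hcard ▸ Fintype.one_lt_card)

theorem pow_pow_eq_self_of_card_eq_sq {K : Type*} [Field K] [Fintype K] {q : ℕ}
    (hcard : Fintype.card K = q ^ 2) (x : K) : (x ^ q) ^ q = x := by
  rw [← pow_mul, ← sq, ← hcard, FiniteField.pow_card]

theorem pow_succ_pow_eq_self_of_card_eq_sq {K : Type*} [Field K] [Fintype K] {q : ℕ}
    (hcard : Fintype.card K = q ^ 2) (x : K) : (x ^ (q + 1)) ^ q = x ^ (q + 1) := by
  rw [pow_succ, mul_pow, pow_pow_eq_self_of_card_eq_sq hcard, mul_comm]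

theorem neg_pow_expChar_pow {R : Type*} [CommRing R] (p : ℕ) [ExpChar R p] (n : ℕ) (x : R) :
    (-x) ^ p ^ n = -x ^ p ^ n := by
  rw [neg_eq_neg_one_mul, mul_pow, neg_one_pow_expChar_pow, neg_one_mul]

section Unital

variable {F : Type*} [Field F] {p n : ℕ}

local notation "q" => p ^ n

theorem card_filter_pow_add_self_eq [Fintype F] [DecidableEq F] [ExpChar F p]
    (hcard : Fintype.card F = q ^ 2) {e : F} (he : e ^ q = e) :
    #{y | y ^ q + y = e} = q := by
  have hq := one_lt_of_card_eq_sq hcard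
  let tr : F →+ F := (iterateFrobenius F p n).toAddMonoidHom + .id F
  have htr (y : F) : tr y = y ^ q + y := rfl
  have hfiber : ∀ c ∈ univ.image tr, #{y | tr y = c} = #{y | tr y = 0} := fun c hc =>
    AddMonoidHom.card_fiber_eq_of_mem_range tr (by simpa using hc) ⟨0, map_zero tr⟩
  have hker : #{y | tr y = 0} ≤ q := by
    simpa [htr, add_eq_zero_iff_eq_neg] using card_filter_pow_eq_mul_le hq (-1 : F)
  have himage : univ.image tr ⊆ ({c | c ^ q = 1 * c} : Finset F) := by
    intro c hc
    obtain ⟨y, -, rfl⟩ := mem_image.1 hc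
    simp [htr, add_pow_expChar_pow, pow_pow_eq_self_of_card_eq_sq hcard, add_comm]
  have hfixed := card_filter_pow_eq_mul_le hq (1 : F)
  have hprod : #(univ.image tr) * #{y | tr y = 0} = q * q := by
    rw [← sq, ← hcard, ← card_univ, card_eq_sum_card_image tr univ, sum_congr rfl hfiber,
      sum_const, smul_eq_mul]
  have hcard_image : #(univ.image tr) = q := by
    nlinarith [card_le_card himage]
  have he_image : e ∈ univ.image tr := by
    rw [eq_of_subset_of_card_le himage (by omega)]
    simpa using he
  calc #{y | y ^ q + y = e} = #{y | tr y = 0} := hfiber e he_image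
    _ = q := by nlinarith

variable (F p n) in
/-- The classical unital in the projectively equivalent form `X^(q+1) + Y^q Z + Y Z^q = 0`:
its affine points `(x, y)` (`Z = 1`), and `none` for the point `(0 : 1 : 0)`. -/
abbrev HermitianUnital : Type _ :=
  Option {v : F × F // v.1 ^ (q + 1) + (v.2 ^ q + v.2) = 0}

theorem card_hermitianUnital [Fintype F] [DecidableEq F] [ExpChar F p]
    (hcard : Fintype.card F = q ^ 2) : Fintype.card (HermitianUnital F p n) = q ^ 3 + 1 := by
  have hfiber (x : F) : #{y | x ^ (q + 1) + (y ^ q + y) = 0} = q := by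
    simp_rw [add_eq_zero_iff_eq_neg']
    refine card_filter_pow_add_self_eq hcard ?_
    rw [neg_pow_expChar_pow, pow_succ_pow_eq_self_of_card_eq_sq hcard]
  rw [Fintype.card_option, Fintype.card_subtype, card_filter, Fintype.sum_prod_type]
  simp_rw [← card_filter, hfiber, sum_const, card_univ, hcard]
  ring

/-- The class of a point in the partition of the unital defined by `(1 : m : 0)`: `some c` for
the secant `y = m x + c`, and `none` for the tangency points of the tangents through `(1 : m : 0)`,
which are `(0 : 1 : 0)` and the points on its polar line `x = -m^q`. -/
def pencilClass [DecidableEq F] (m : F) : HermitianUnital F p n → Option F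
  | none => none
  | some v => if v.1.1 = -m ^ q then none else some (v.1.2 - m * v.1.1)

theorem trace_sub_mul_ne_pow_succ [Fintype F] [ExpChar F p] (hcard : Fintype.card F = q ^ 2)
    {m x y : F} (hv : x ^ (q + 1) + (y ^ q + y) = 0) (hx : x ≠ -m ^ q) :
    (y - m * x) ^ q + (y - m * x) ≠ m ^ (q + 1) := by
  have key : m ^ (q + 1) - ((y - m * x) ^ q + (y - m * x)) = (x + m ^ q) ^ (q + 1) := by
    rw [pow_succ (x + m ^ q), add_pow_expChar_pow, pow_pow_eq_self_of_card_eq_sq hcard,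
      sub_pow_expChar_pow, mul_pow]
    rw [pow_succ] at hv ⊢
    linear_combination -hv
  intro h
  rw [h, sub_self, eq_comm, pow_eq_zero_iff (Nat.succ_ne_zero _)] at key
  exact hx (eq_neg_of_add_eq_zero_left key)

theorem card_image_pencilClass_le [Fintype F] [DecidableEq F] [ExpChar F p]
    (hcard : Fintype.card F = q ^ 2) (m : F) :
    #(univ.image (pencilClass (p := p) (n := n) m)) ≤ q ^ 2 - q + 1 := by
  have hsub : univ.image (pencilClass (p := p) (n := n) m) ⊆
      insert none (({c | ¬c ^ q + c = m ^ (q + 1)} : Finset F).map .some) := by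
    rintro _ hu
    obtain ⟨_ | ⟨⟨x, y⟩, hv⟩, -, rfl⟩ := mem_image.1 hu
    · simp [pencilClass]
    · simp only [pencilClass]
      split_ifs with hx
      · simp
      · simp [trace_sub_mul_ne_pow_succ hcard hv hx]
  have hsecants : #({c | ¬c ^ q + c = m ^ (q + 1)} : Finset F) = q ^ 2 - q := by
    have := card_filter_add_card_filter_not (s := univ) (fun c : F => c ^ q + c = m ^ (q + 1))
    rw [card_filter_pow_add_self_eq hcard (pow_succ_pow_eq_self_of_card_eq_sq hcard m),
      card_univ, hcard] at this
    omega
  calc _ ≤ _ := card_le_card hsub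
    _ ≤ _ := card_insert_le _ _
    _ = _ := by rw [card_map, hsecants]

theorem pencilClass_injective_pair [DecidableEq F] [ExpChar F p] {m m' : F} (hm : m ≠ m') :
    Injective fun u : HermitianUnital F p n => (pencilClass m u, pencilClass m' u) := by
  have hpolar : -m ^ q ≠ -m' ^ q := fun h =>
    hm (iterateFrobenius_inj F p n (by simpa [iterateFrobenius_def] using h))
  rintro (_ | ⟨⟨x, y⟩, hv⟩) (_ | ⟨⟨x', y'⟩, hv'⟩) h
  · rfl
  · simp [pencilClass] at h
    exact absurd (h.1.symm.trans h.2) hpolar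
  · simp [pencilClass] at h
    exact absurd (h.1.symm.trans h.2) hpolar
  · simp only [pencilClass, Prod.mk.injEq] at h
    obtain ⟨h1, h2⟩ := h
    split_ifs at h1 h2 <;> simp_all
    have hx : x = x' := by
      have : (m - m') * (x - x') = 0 := by linear_combination h2 - h1
      simpa [sub_eq_zero, hm] using this
    subst hx
    exact ⟨rfl, by linear_combination h1⟩

theorem existsPIRCode_hermitianUnital [Fintype F] [DecidableEq F] [ExpChar F p]
    (hcard : Fintype.card F = q ^ 2) {k : ℕ} (hk : k ≤ q ^ 2) :
    ExistsPIRCode (q ^ 3 + 1) (q ^ 3 + 1 + k * (q ^ 2 - q + 1)) (k + 1) := by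
  obtain ⟨μ⟩ : Nonempty (Fin k ↪ F) := Embedding.nonempty_of_card_le (by simpa [hcard])
  have := ExistsPIRCode.of_pairwise_injective (fun a => pencilClass (p := p) (n := n) (μ a))
    (fun a b hab => pencilClass_injective_pair (μ.injective.ne hab))
    (fun a => card_image_pencilClass_le hcard (μ a))
  rwa [card_hermitianUnital hcard] at this

end Unital

theorem pir_code_of_unital_general (q : ℕ) (hq : IsPrimePow q)
    (s : ℕ) (hs : s = q ^ 3 + 1)
    (k : ℕ) (hk2 : 2 ≤ k) (hk : k ≤ q ^ 2 + 1) :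
    s + (k - 1) * (s / (q + 1)) = s + (k - 1) * (q ^ 2 - q + 1) ∧
      ExistsPIRCode s (s + (k - 1) * (q ^ 2 - q + 1)) k := by
  subst hs
  have hfactor : (q + 1) * (q ^ 2 - q + 1) = q ^ 3 + 1 := by
    zify [Nat.le_self_pow two_ne_zero q]
    ring
  refine ⟨by rw [← hfactor, Nat.mul_div_cancel_left _ q.succ_pos], ?_⟩
  obtain ⟨p, n, hp, hn, rfl⟩ := hq
  obtain ⟨k, rfl⟩ : ∃ k', k = k' + 1 := ⟨k - 1, by omega⟩
  have : Fact p.Prime := ⟨hp.nat_prime⟩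
  let : Fintype (GaloisField p (2 * n)) := .ofFinite _
  classical
  have hcard : Fintype.card (GaloisField p (2 * n)) = (p ^ n) ^ 2 := by
    rw [Fintype.card_eq_nat_card, GaloisField.card p _ (by omega), mul_comm, pow_mul]
  simpa using existsPIRCode_hermitianUnital hcard (k := k) (by omega)

/-- Let `q ≥ 2` be a prime power and `s = q³ + 1` (the size of the
classical unital in `PG(2,q²)`). Then for every `2 ≤ k ≤ q² + 1` there exists a
`k`-server PIR `[m,s]`-code with `m = s + (k-1)·s/(q+1) = s + (k-1)(q² - q + 1)`. -/
theorem pir_code_of_unital (q : ℕ) (hq2 : 2 ≤ q) (hq : IsPrimePow q)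
    (s : ℕ) (hs : s = q ^ 3 + 1)
    (k : ℕ) (hk2 : 2 ≤ k) (hk : k ≤ q ^ 2 + 1) :
    s + (k - 1) * (s / (q + 1)) = s + (k - 1) * (q ^ 2 - q + 1) ∧
      ExistsPIRCode s (s + (k - 1) * (q ^ 2 - q + 1)) k :=
  pir_code_of_unital_general q hq s hs k hk2 hk
end
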